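/- Define σ_λ : D_λ → Pol(T*ℝ^n) on the k-th homogeneous component by σ_λ|_{S^k} = Σ_{ℓ≤k} C_ℓ^k Div^{k−ℓ} with C_ℓ^k the coefficients satisfying C_k^k = 1 and C_ℓ^k = −((k−1+λ(n+1))/((k−ℓ)(k+ℓ+n))) C_ℓ^{k−1}. Then for every generator X_s = x^s E of sl(n+1,ℝ), σ_λ intertwines the module actions: L_{X_s} ∘ σ_λ = σ_λ ∘ (L_{X_s} − (E_ξ + λ(n+1)) ∂_{ξ_s}), where E_ξ = ξ_i ∂_{ξ_i}. -/

import Mathlib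

open MvPolynomial
open scoped BigOperators

/-- `Pol(T*ℝⁿ)`: polynomials in the variables `x¹,…,xⁿ` (indexed by
`Sum.inl`) and `ξ₁,…,ξₙ` (indexed by `Sum.inr`). -/
abbrev Pol (n : ℕ) := MvPolynomial (Fin n ⊕ Fin n) ℝ

/-- The divergence operator `Div = Σᵢ ∂ₓᵢ ∂_{ξᵢ}`. -/
noncomputable def divOp {n : ℕ} (P : Pol n) : Pol n :=
  ∑ i, MvPolynomial.pderiv (Sum.inl i) (MvPolynomial.pderiv (Sum.inr i) P)

/-- The Hamiltonian lift of `H`: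
`L_H = Σᵢ (∂_{ξᵢ}H ∂_{xᵢ} − ∂_{xᵢ}H ∂_{ξᵢ})`. -/
noncomputable def ham {n : ℕ} (H P : Pol n) : Pol n :=
  ∑ i, (MvPolynomial.pderiv (Sum.inr i) H * MvPolynomial.pderiv (Sum.inl i) P
        - MvPolynomial.pderiv (Sum.inl i) H * MvPolynomial.pderiv (Sum.inr i) P)

/-- The fiberwise Euler operator `E = Σᵢ ξᵢ ∂_{ξᵢ}`. -/
noncomputable def eulerXi {n : ℕ} (P : Pol n) : Pol n :=
  ∑ i, MvPolynomial.X (Sum.inr i) * MvPolynomial.pderiv (Sum.inr i) P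

/-- The quadratic vector field `X_s = x^s E`, as the function
`x^s Σⱼ xʲ ξⱼ` on `T*ℝⁿ`. -/
noncomputable def quadX {n : ℕ} (s : Fin n) : Pol n :=
  MvPolynomial.X (Sum.inl s) *
    ∑ j, MvPolynomial.X (Sum.inl j) * MvPolynomial.X (Sum.inr j)

/-- The symbol map `σ_λ` on the homogeneous component `S^k`, built from the
coefficients `C ℓ k`: `σ_λ|_{S^k} = Σ_{ℓ ≤ k} C_ℓ^k Div^{k−ℓ}`. -/
noncomputable def symbolMap {n : ℕ} (C : ℕ → ℕ → ℝ) (k : ℕ) (P : Pol n) :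
    Pol n :=
  ∑ ℓ ∈ Finset.range (k + 1), C ℓ k • divOp^[k - ℓ] P

-- auxiliary
theorem pderiv_pderiv_comm {σ : Type*} [DecidableEq σ] (i j : σ) (f : MvPolynomial σ ℝ) :
    pderiv i (pderiv j f) = pderiv j (pderiv i f) := by
  induction f using MvPolynomial.induction_on' with
  | monomial s a =>
      by_cases h : i = j
      · subst h; rfl
      · simp only [pderiv_monomial]
        rw [tsub_right_comm]
        congr 1
        rw [Finsupp.tsub_apply, Finsupp.tsub_apply, Finsupp.single_apply,
            Finsupp.single_apply, if_neg h, if_neg (Ne.symm h)]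
        simp only [Nat.sub_zero]
        ring
  | add p q hp hq => simp [map_add, hp, hq]

variable {n : ℕ}

noncomputable def eulerX {n : ℕ} (P : Pol n) : Pol n :=
  ∑ i, MvPolynomial.X (Sum.inl i) * MvPolynomial.pderiv (Sum.inl i) P

noncomputable def Qp (n : ℕ) : Pol n :=
  ∑ j, MvPolynomial.X (Sum.inl j) * MvPolynomial.X (Sum.inr j)

-- linearity
theorem divOp_add (P Q : Pol n) : divOp (P + Q) = divOp P + divOp Q := by
  simp [divOp, map_add, Finset.sum_add_distrib]

theorem divOp_smul (c : ℝ) (P : Pol n) : divOp (c • P) = c • divOp P := by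
  simp [divOp, map_smul, Finset.smul_sum]

theorem divOp_sum {α : Type*} (t : Finset α) (f : α → Pol n) :
    divOp (∑ a ∈ t, f a) = ∑ a ∈ t, divOp (f a) := by
  simp [divOp, map_sum]
  exact Finset.sum_comm

theorem eulerXi_add (P Q : Pol n) : eulerXi (P + Q) = eulerXi P + eulerXi Q := by
  simp [eulerXi, map_add, mul_add, Finset.sum_add_distrib]

theorem eulerXi_smul (c : ℝ) (P : Pol n) : eulerXi (c • P) = c • eulerXi P := by
  simp [eulerXi, map_smul, Finset.smul_sum, mul_smul_comm]

theorem ham_add (H P Q : Pol n) : ham H (P + Q) = ham H P + ham H Q := by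
  simp only [ham, map_add, mul_add]
  rw [← Finset.sum_add_distrib]
  congr 1; ext i; ring

theorem ham_smul (H : Pol n) (c : ℝ) (P : Pol n) : ham H (c • P) = c • ham H P := by
  simp only [ham, smul_eq_C_mul, pderiv_C_mul, Finset.mul_sum]
  congr 1; ext i; ring

theorem ham_sum {α : Type*} (H : Pol n) (t : Finset α) (f : α → Pol n) :
    ham H (∑ a ∈ t, f a) = ∑ a ∈ t, ham H (f a) := by
  classical
  induction t using Finset.induction_on with
  | empty => simp [ham]
  | insert _ _ h ih => rw [Finset.sum_insert h, ham_add, ih, Finset.sum_insert h]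

theorem divOp_sub (P Q : Pol n) : divOp (P - Q) = divOp P - divOp Q := by
  simp [divOp, map_sub, Finset.sum_sub_distrib]

theorem divOp_X_inl_mul (s : Fin n) (R : Pol n) :
    divOp (X (Sum.inl s) * R)
      = X (Sum.inl s) * divOp R + pderiv (Sum.inr s) R := by
  unfold divOp
  have h1 : ∀ i : Fin n,
      pderiv (Sum.inl i) (pderiv (Sum.inr i) (X (Sum.inl s) * R))
        = (if i = s then pderiv (Sum.inr i) R else 0)
          + X (Sum.inl s) * pderiv (Sum.inl i) (pderiv (Sum.inr i) R) := by
    intro i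
    rw [pderiv_mul, pderiv_X_of_ne (by simp), zero_mul, zero_add, pderiv_mul]
    by_cases hi : i = s
    · subst hi; rw [pderiv_X_self, if_pos rfl, one_mul]
    · rw [pderiv_X_of_ne (fun h => hi (Sum.inl.inj h).symm), zero_mul, if_neg hi]
  rw [Finset.sum_congr rfl fun i _ => h1 i, Finset.sum_add_distrib,
    Finset.sum_ite_eq' Finset.univ s, if_pos (Finset.mem_univ s), ← Finset.mul_sum]
  ring

theorem divOp_X_inr_mul (s : Fin n) (R : Pol n) :
    divOp (X (Sum.inr s) * R)
      = X (Sum.inr s) * divOp R + pderiv (Sum.inl s) R := by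
  unfold divOp
  have h1 : ∀ i : Fin n,
      pderiv (Sum.inl i) (pderiv (Sum.inr i) (X (Sum.inr s) * R))
        = (if i = s then pderiv (Sum.inl i) R else 0)
          + X (Sum.inr s) * pderiv (Sum.inl i) (pderiv (Sum.inr i) R) := by
    intro i
    by_cases hi : i = s
    · subst hi
      rw [pderiv_mul, pderiv_X_self, one_mul, map_add, pderiv_mul,
        pderiv_X_of_ne (by simp), zero_mul, zero_add, if_pos rfl, add_comm]
    · rw [pderiv_mul, pderiv_X_of_ne (fun h => hi (Sum.inr.inj h).symm), zero_mul,
        zero_add, pderiv_mul, pderiv_X_of_ne (by simp), zero_mul, zero_add, if_neg hi,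
        zero_add]
  rw [Finset.sum_congr rfl fun i _ => h1 i, Finset.sum_add_distrib,
    Finset.sum_ite_eq' Finset.univ s, if_pos (Finset.mem_univ s), ← Finset.mul_sum]
  ring

theorem pderiv_divOp (v : Fin n ⊕ Fin n) (R : Pol n) :
    pderiv v (divOp R) = divOp (pderiv v R) := by
  unfold divOp
  rw [map_sum]
  refine Finset.sum_congr rfl fun i _ => ?_
  rw [pderiv_pderiv_comm v (Sum.inl i)]
  congr 1
  rw [pderiv_pderiv_comm v (Sum.inr i)]

theorem pderiv_inr_eulerX (s : Fin n) (R : Pol n) :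
    pderiv (Sum.inr s) (eulerX R) = eulerX (pderiv (Sum.inr s) R) := by
  unfold eulerX
  rw [map_sum]
  refine Finset.sum_congr rfl fun i _ => ?_
  rw [pderiv_mul, pderiv_X_of_ne (by simp), zero_mul, zero_add,
    pderiv_pderiv_comm]

theorem pderiv_inr_eulerXi (s : Fin n) (R : Pol n) :
    pderiv (Sum.inr s) (eulerXi R)
      = eulerXi (pderiv (Sum.inr s) R) + pderiv (Sum.inr s) R := by
  unfold eulerXi
  rw [map_sum]
  have h1 : ∀ i : Fin n,
      pderiv (Sum.inr s) (X (Sum.inr i) * pderiv (Sum.inr i) R)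
        = (if i = s then pderiv (Sum.inr i) R else 0)
          + X (Sum.inr i) * pderiv (Sum.inr i) (pderiv (Sum.inr s) R) := by
    intro i
    rw [pderiv_mul, pderiv_pderiv_comm]
    by_cases hi : i = s
    · subst hi; rw [pderiv_X_self, one_mul, if_pos rfl]
    · rw [pderiv_X_of_ne (fun h => hi (Sum.inr.inj h)), zero_mul, if_neg hi, zero_add]
  rw [Finset.sum_congr rfl fun i _ => h1 i, Finset.sum_add_distrib,
    Finset.sum_ite_eq' Finset.univ s, if_pos (Finset.mem_univ s)]
  ring

theorem divOp_eulerX (R : Pol n) :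
    divOp (eulerX R) = eulerX (divOp R) + divOp R := by
  unfold eulerX
  rw [divOp_sum]
  have h1 : ∀ j : Fin n, divOp (X (Sum.inl j) * pderiv (Sum.inl j) R)
      = X (Sum.inl j) * pderiv (Sum.inl j) (divOp R)
        + pderiv (Sum.inr j) (pderiv (Sum.inl j) R) := by
    intro j
    rw [divOp_X_inl_mul, pderiv_divOp]
  rw [Finset.sum_congr rfl fun j _ => h1 j, Finset.sum_add_distrib]
  congr 1
  unfold divOp
  exact Finset.sum_congr rfl fun j _ => pderiv_pderiv_comm _ _ _

theorem divOp_eulerXi (R : Pol n) :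
    divOp (eulerXi R) = eulerXi (divOp R) + divOp R := by
  unfold eulerXi
  rw [divOp_sum]
  have h1 : ∀ j : Fin n, divOp (X (Sum.inr j) * pderiv (Sum.inr j) R)
      = X (Sum.inr j) * pderiv (Sum.inr j) (divOp R)
        + pderiv (Sum.inl j) (pderiv (Sum.inr j) R) := by
    intro j
    rw [divOp_X_inr_mul, pderiv_divOp]
  rw [Finset.sum_congr rfl fun j _ => h1 j, Finset.sum_add_distrib]
  rfl

theorem divOp_Qp_mul (R : Pol n) :
    divOp (Qp n * R)
      = Qp n * divOp R + (n : ℝ) • R + eulerX R + eulerXi R := by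
  have h1 : ∀ j : Fin n, divOp (X (Sum.inl j) * (X (Sum.inr j) * R))
      = X (Sum.inl j) * (X (Sum.inr j) * divOp R)
        + X (Sum.inl j) * pderiv (Sum.inl j) R
        + (R + X (Sum.inr j) * pderiv (Sum.inr j) R) := by
    intro j
    rw [divOp_X_inl_mul, divOp_X_inr_mul, pderiv_mul, pderiv_X_self, one_mul, mul_add]
  rw [show Qp n * R = ∑ j, X (Sum.inl j) * (X (Sum.inr j) * R) by
      rw [Qp, Finset.sum_mul]; exact Finset.sum_congr rfl fun j _ => mul_assoc _ _ _,
    divOp_sum, Finset.sum_congr rfl fun j _ => h1 j, Finset.sum_add_distrib,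
    Finset.sum_add_distrib, Finset.sum_add_distrib]
  have h2 : (∑ _j : Fin n, R) = (n : ℝ) • R := by
    rw [Finset.sum_const, Finset.card_univ, Fintype.card_fin, Nat.cast_smul_eq_nsmul]
  rw [h2]
  unfold eulerX eulerXi Qp
  rw [Finset.sum_mul]
  rw [Finset.sum_congr rfl fun j (_ : j ∈ Finset.univ) =>
    (mul_assoc (X (Sum.inl j)) (X (Sum.inr j)) (divOp R))]
  ring

theorem pderiv_inr_Qp (i : Fin n) :
    pderiv (Sum.inr i) (Qp n) = X (Sum.inl i) := by
  unfold Qp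
  rw [map_sum]
  have h1 : ∀ j : Fin n, pderiv (Sum.inr i) ((X (Sum.inl j) * X (Sum.inr j) : Pol n))
      = if j = i then X (Sum.inl j) else 0 := by
    intro j
    have hne : (Sum.inl j : Fin n ⊕ Fin n) ≠ Sum.inr i := by simp
    rw [pderiv_mul, pderiv_X_of_ne hne, zero_mul, zero_add]
    by_cases hj : j = i
    · subst hj; rw [pderiv_X_self, mul_one, if_pos rfl]
    · rw [pderiv_X_of_ne (fun h => hj (Sum.inr.inj h)), mul_zero, if_neg hj]
  rw [Finset.sum_congr rfl fun j _ => h1 j, Finset.sum_ite_eq' Finset.univ i,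
    if_pos (Finset.mem_univ i)]

theorem pderiv_inl_Qp (i : Fin n) :
    pderiv (Sum.inl i) (Qp n) = X (Sum.inr i) := by
  unfold Qp
  rw [map_sum]
  have h1 : ∀ j : Fin n, pderiv (Sum.inl i) ((X (Sum.inl j) * X (Sum.inr j) : Pol n))
      = if j = i then X (Sum.inr j) else 0 := by
    intro j
    have hne : (Sum.inr j : Fin n ⊕ Fin n) ≠ Sum.inl i := by simp
    rw [pderiv_mul, pderiv_X_of_ne hne, mul_zero, add_zero]
    by_cases hj : j = i
    · subst hj; rw [pderiv_X_self, one_mul, if_pos rfl]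
    · rw [pderiv_X_of_ne (fun h => hj (Sum.inl.inj h)), zero_mul, if_neg hj]
  rw [Finset.sum_congr rfl fun j _ => h1 j, Finset.sum_ite_eq' Finset.univ i,
    if_pos (Finset.mem_univ i)]

theorem quadX_eq (s : Fin n) : quadX s = X (Sum.inl s) * Qp n := rfl

theorem ham_quadX (s : Fin n) (P : Pol n) :
    ham (quadX s) P
      = X (Sum.inl s) * eulerX P - Qp n * pderiv (Sum.inr s) P
        - X (Sum.inl s) * eulerXi P := by
  unfold ham
  have h1 : ∀ i : Fin n,
      pderiv (Sum.inr i) (quadX s) * pderiv (Sum.inl i) P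
        - pderiv (Sum.inl i) (quadX s) * pderiv (Sum.inr i) P
      = X (Sum.inl s) * (X (Sum.inl i) * pderiv (Sum.inl i) P)
        - (if i = s then Qp n * pderiv (Sum.inr i) P else 0)
        - X (Sum.inl s) * (X (Sum.inr i) * pderiv (Sum.inr i) P) := by
    intro i
    rw [quadX_eq, pderiv_mul, pderiv_X_of_ne (by simp), zero_mul, zero_add,
      pderiv_inr_Qp, pderiv_mul, pderiv_inl_Qp]
    by_cases hi : i = s
    · subst hi; rw [pderiv_X_self, if_pos rfl]; ring
    · rw [pderiv_X_of_ne (fun h => hi (Sum.inl.inj h).symm), if_neg hi]; ring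
  rw [Finset.sum_congr rfl fun i _ => h1 i, Finset.sum_sub_distrib,
    Finset.sum_sub_distrib, Finset.sum_ite_eq' Finset.univ s,
    if_pos (Finset.mem_univ s), ← Finset.mul_sum, ← Finset.mul_sum]
  rfl

/-- The key commutator identity `[L_{X_s}, Div] = (n+1)∂_{ξ_s} + 2 E_ξ ∂_{ξ_s}`. -/
theorem ham_divOp_comm (s : Fin n) (P : Pol n) :
    ham (quadX s) (divOp P)
      = divOp (ham (quadX s) P) + ((n : ℝ) + 1) • pderiv (Sum.inr s) P
        + (2 : ℝ) • eulerXi (pderiv (Sum.inr s) P) := by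
  rw [ham_quadX, ham_quadX, divOp_sub, divOp_sub, divOp_X_inl_mul, divOp_X_inl_mul,
    divOp_Qp_mul, divOp_eulerX, divOp_eulerXi, pderiv_inr_eulerX, pderiv_inr_eulerXi,
    pderiv_divOp]
  simp only [smul_eq_C_mul, map_add, map_one, map_ofNat]
  ring

theorem eulerXi_sum {α : Type*} (t : Finset α) (f : α → Pol n) :
    eulerXi (∑ a ∈ t, f a) = ∑ a ∈ t, eulerXi (f a) := by
  classical
  induction t using Finset.induction_on with
  | empty => simp [eulerXi]
  | insert _ _ h ih => rw [Finset.sum_insert h, eulerXi_add, ih, Finset.sum_insert h]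

theorem eulerXi_pderiv_eigen {c : ℝ} {P : Pol n} (h : eulerXi P = c • P) (s : Fin n) :
    eulerXi (pderiv (Sum.inr s) P) = (c - 1) • pderiv (Sum.inr s) P := by
  have h2 := pderiv_inr_eulerXi s P
  rw [h, smul_eq_C_mul, pderiv_C_mul, ← smul_eq_C_mul] at h2
  rw [eq_sub_of_add_eq h2.symm, sub_smul, one_smul]

theorem eulerXi_divOp_eigen {c : ℝ} {P : Pol n} (h : eulerXi P = c • P) :
    eulerXi (divOp P) = (c - 1) • divOp P := by
  have h2 := divOp_eulerXi P
  rw [h, divOp_smul] at h2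
  rw [eq_sub_of_add_eq h2.symm, sub_smul, one_smul]

theorem eulerXi_divOp_iter {c : ℝ} {P : Pol n} (h : eulerXi P = c • P) (m : ℕ) :
    eulerXi (divOp^[m] P) = (c - m) • divOp^[m] P := by
  induction m with
  | zero => simpa using h
  | succ m ih =>
      rw [Function.iterate_succ_apply', eulerXi_divOp_eigen ih]
      congr 1
      push_cast
      ring

theorem divOp_iter_smul (m : ℕ) (c : ℝ) (P : Pol n) :
    divOp^[m] (c • P) = c • divOp^[m] P := by
  induction m with
  | zero => rfl
  | succ m ih => rw [Function.iterate_succ_apply', Function.iterate_succ_apply', ih, divOp_smul]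

theorem divOp_iter_add (m : ℕ) (P Q : Pol n) :
    divOp^[m] (P + Q) = divOp^[m] P + divOp^[m] Q := by
  induction m with
  | zero => rfl
  | succ m ih => rw [Function.iterate_succ_apply', Function.iterate_succ_apply',
      Function.iterate_succ_apply', ih, divOp_add]

theorem pderiv_divOp_iter (v : Fin n ⊕ Fin n) (m : ℕ) (P : Pol n) :
    pderiv v (divOp^[m] P) = divOp^[m] (pderiv v P) := by
  induction m with
  | zero => rfl
  | succ m ih => rw [Function.iterate_succ_apply', Function.iterate_succ_apply',
      pderiv_divOp, ih]

theorem ham_divOp_iter (s : Fin n) {c : ℝ} {P : Pol n} (h : eulerXi P = c • P) (m : ℕ) :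
    ham (quadX s) (divOp^[m + 1] P)
      = divOp^[m + 1] (ham (quadX s) P)
        + (((m : ℝ) + 1) * (2 * c - ((m : ℝ) + 1) + n))
            • divOp^[m] (pderiv (Sum.inr s) P) := by
  induction m with
  | zero =>
      rw [Function.iterate_one, Function.iterate_zero, id_eq, ham_divOp_comm,
        eulerXi_pderiv_eigen h s, add_assoc, smul_smul, ← add_smul]
      congr 2
      push_cast
      ring
  | succ m ih =>
      have he : eulerXi (divOp^[m + 1] (pderiv (Sum.inr s) P))
          = (c - ((m + 1 : ℕ) : ℝ) - 1) • divOp^[m + 1] (pderiv (Sum.inr s) P) := by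
        have h4 := eulerXi_pderiv_eigen (eulerXi_divOp_iter h (m + 1)) s
        rwa [pderiv_divOp_iter] at h4
      rw [show divOp^[m + 1 + 1] P = divOp (divOp^[m + 1] P) from
          Function.iterate_succ_apply' _ _ _,
        ham_divOp_comm, ih, divOp_add, divOp_smul, pderiv_divOp_iter, he,
        show divOp (divOp^[m] (pderiv (Sum.inr s) P))
            = divOp^[m + 1] (pderiv (Sum.inr s) P) from
          (Function.iterate_succ_apply' _ _ _).symm,
        show divOp (divOp^[m + 1] (ham (quadX s) P))
            = divOp^[m + 1 + 1] (ham (quadX s) P) from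
          (Function.iterate_succ_apply' _ _ _).symm,
        smul_smul, add_assoc, add_assoc, ← add_smul, ← add_smul]
      congr 2
      push_cast
      ring

theorem eulerXi_monomial (m : (Fin n ⊕ Fin n) →₀ ℕ) (a : ℝ) :
    eulerXi (monomial m a : Pol n)
      = (((∑ i, m (Sum.inr i)) : ℕ) : ℝ) • monomial m a := by
  unfold eulerXi
  have h1 : ∀ i : Fin n,
      X (Sum.inr i) * pderiv (Sum.inr i) (monomial m a : Pol n)
        = ((m (Sum.inr i) : ℝ)) • monomial m a := by
    intro i
    rw [pderiv_monomial, X, monomial_mul, one_mul, smul_monomial]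
    by_cases hz : m (Sum.inr i) = 0
    · rw [hz]; simp
    · congr 1
      · rw [add_comm, tsub_add_cancel_of_le]
        rw [Finsupp.single_le_iff]
        omega
      · rw [smul_eq_mul]; ring
  rw [Finset.sum_congr rfl fun i _ => h1 i, ← Finset.sum_smul]
  congr 1
  push_cast
  rfl

theorem pderiv_inr_eq_zero_of_eulerXi_zero {P : Pol n} (h : eulerXi P = 0)
    (s : Fin n) : pderiv (Sum.inr s) P = 0 := by
  have hsup : ∀ m ∈ P.support, m (Sum.inr s) = 0 := by
    intro m hm
    have h1 : coeff m (eulerXi P) = 0 := by rw [h]; rfl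
    rw [P.as_sum, eulerXi_sum] at h1
    simp only [eulerXi_monomial, coeff_smul, coeff_sum, coeff_monomial] at h1
    rw [Finset.sum_eq_single m (fun b _ hb => by rw [if_neg hb, smul_zero])
      (fun hmem => absurd hm hmem), if_pos rfl] at h1
    have hc : coeff m P ≠ 0 := mem_support_iff.mp hm
    rw [smul_eq_mul] at h1
    rcases mul_eq_zero.mp h1 with h2 | h2
    · have h4 : (∑ i, m (Sum.inr i)) = 0 := by exact_mod_cast h2
      exact (Finset.sum_eq_zero_iff).mp h4 s (Finset.mem_univ s)
    · exact absurd h2 hc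
  conv_lhs => rw [P.as_sum]
  rw [map_sum]
  apply Finset.sum_eq_zero
  intro m hm
  rw [pderiv_monomial, hsup m hm, Nat.cast_zero, mul_zero, monomial_zero]


/-- the symbol map `σ_λ` built from the coefficients
satisfying `C_k^k = 1` and
`C_ℓ^k = −((k−1+λ(n+1))/((k−ℓ)(k+ℓ+n))) C_ℓ^{k−1}` intertwines, on `S^k`,
the Hamiltonian lift of each generator `X_s = x^s E` with the `D_λ`-action
`L_{X_s} − (E_ξ + λ(n+1)) ∂_{ξ_s}`. -/
theorem symbolMap_equivariant {n : ℕ} (hn : 1 ≤ n) (lam : ℝ)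
    (C : ℕ → ℕ → ℝ)
    (hdiag : ∀ k, C k k = 1)
    (hrec : ∀ ℓ k : ℕ, ℓ < k →
      C ℓ k = -((((k : ℝ) - 1 + lam * ((n : ℝ) + 1)) /
        (((k : ℝ) - (ℓ : ℝ)) * ((k : ℝ) + (ℓ : ℝ) + (n : ℝ)))) * C ℓ (k - 1)))
    (s : Fin n) (k : ℕ) (P : Pol n) (hP : eulerXi P = (k : ℝ) • P) :
    ham (quadX s) (symbolMap C k P)
      = symbolMap C k (ham (quadX s) P)
        - symbolMap C (k - 1)
            (eulerXi (MvPolynomial.pderiv (Sum.inr s) P)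
              + (lam * ((n : ℝ) + 1)) • MvPolynomial.pderiv (Sum.inr s) P) := by
  by_cases hk : k = 0
  · subst hk
    have hD : pderiv (Sum.inr s) P = 0 :=
      pderiv_inr_eq_zero_of_eulerXi_zero (by simpa using hP) s
    have hz : eulerXi (0 : Pol n) = 0 := by simp [eulerXi]
    simp [symbolMap, hD, hz, ham_smul]
  · obtain ⟨k', rfl⟩ : ∃ k', k = k' + 1 :=
      ⟨k - 1, (Nat.succ_pred_eq_of_pos (Nat.pos_of_ne_zero hk)).symm⟩
    have key : ∀ ℓ ∈ Finset.range (k' + 1),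
        ham (quadX s) (divOp^[k' + 1 - ℓ] P)
          = divOp^[k' + 1 - ℓ] (ham (quadX s) P)
            + ((((k' : ℝ) + 1 - ℓ) * ((k' : ℝ) + 1 + ℓ + n)))
                • divOp^[k' - ℓ] (pderiv (Sum.inr s) P) := by
      intro ℓ hℓ
      have hℓ' : ℓ ≤ k' := Nat.lt_succ_iff.mp (Finset.mem_range.mp hℓ)
      have h1 := ham_divOp_iter s hP (k' - ℓ)
      rw [show k' - ℓ + 1 = k' + 1 - ℓ by omega] at h1
      rw [h1]
      congr 2
      rw [Nat.cast_sub hℓ']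
      push_cast
      ring
    have hLHS :
        ham (quadX s) (symbolMap C (k' + 1) P)
          = symbolMap C (k' + 1) (ham (quadX s) P)
            + ∑ ℓ ∈ Finset.range (k' + 1),
                (C ℓ (k' + 1) * (((k' : ℝ) + 1 - ℓ) * ((k' : ℝ) + 1 + ℓ + n)))
                  • divOp^[k' - ℓ] (pderiv (Sum.inr s) P) := by
      unfold symbolMap
      rw [ham_sum]
      rw [Finset.sum_congr rfl fun ℓ _ => ham_smul _ _ _]
      rw [Finset.sum_range_succ, Nat.sub_self, Function.iterate_zero, id_eq]
      rw [Finset.sum_congr rfl fun ℓ hℓ => by rw [key ℓ hℓ, smul_add, smul_smul]]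
      rw [Finset.sum_add_distrib]
      rw [Finset.sum_range_succ
        (fun ℓ => C ℓ (k' + 1) • divOp^[k' + 1 - ℓ] (ham (quadX s) P)) (k' + 1),
        Nat.sub_self, Function.iterate_zero, id_eq]
      abel
    have hcor :
        symbolMap C (k' + 1 - 1)
            (eulerXi (pderiv (Sum.inr s) P)
              + (lam * ((n : ℝ) + 1)) • pderiv (Sum.inr s) P)
          = ∑ ℓ ∈ Finset.range (k' + 1),
              (C ℓ k' * (((k' : ℝ) + 1) - 1 + lam * ((n : ℝ) + 1)))
                • divOp^[k' - ℓ] (pderiv (Sum.inr s) P) := by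
      have hE : eulerXi (pderiv (Sum.inr s) P)
          = (((k' + 1 : ℕ) : ℝ) - 1) • pderiv (Sum.inr s) P :=
        eulerXi_pderiv_eigen hP s
      rw [hE, Nat.add_sub_cancel]
      unfold symbolMap
      refine Finset.sum_congr rfl fun ℓ _ => ?_
      rw [← add_smul, divOp_iter_smul, smul_smul]
      congr 2
      push_cast
      ring
    have hsum : ∑ ℓ ∈ Finset.range (k' + 1),
        (C ℓ (k' + 1) * (((k' : ℝ) + 1 - ℓ) * ((k' : ℝ) + 1 + ℓ + n)))
          • divOp^[k' - ℓ] (pderiv (Sum.inr s) P)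
        = - ∑ ℓ ∈ Finset.range (k' + 1),
            (C ℓ k' * (((k' : ℝ) + 1) - 1 + lam * ((n : ℝ) + 1)))
              • divOp^[k' - ℓ] (pderiv (Sum.inr s) P) := by
      rw [← Finset.sum_neg_distrib]
      refine Finset.sum_congr rfl fun ℓ hℓ => ?_
      rw [← neg_smul]
      congr 1
      have hℓ' : ℓ < k' + 1 := Finset.mem_range.mp hℓ
      have h2 := hrec ℓ (k' + 1) hℓ'
      rw [Nat.add_sub_cancel] at h2
      have hne1 : ((k' : ℝ) + 1 - ℓ) ≠ 0 := by
        have : (ℓ : ℝ) ≤ k' := by exact_mod_cast Nat.lt_succ_iff.mp hℓ'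
        nlinarith
      have hne2 : ((k' : ℝ) + 1 + ℓ + n) ≠ 0 := by positivity
      rw [show ((k' + 1 : ℕ) : ℝ) = (k' : ℝ) + 1 by push_cast; ring] at h2
      rw [h2]
      field_simp
    rw [hLHS, hcor, hsum]
    abel
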